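/- Let L be a free abelian group with basis B, q a prime, x ∈ B, and let M = L ⊕ₓ ℤ[1/q] = ⟨L ∪ {x/qⁱ : i ≥ 1}⟩ inside ℚ ⊗ L. Then ⋂_{i=1}^∞ qⁱM = {(m/qⁱ)x : m ∈ ℤ, i ≥ 1} = x·ℤ[1/q]. -/

import Mathlib

/-!
Every element of `M` has integer coordinates away from `x₀` and an `x₀`-coordinate
in `ℤ[1/q]`.
An element of `⋂ qⁱM` therefore has, at each `j ≠ x₀`, a coordinate divisible by every power
of `q` in `ℤ`, which forces it to vanish; so it is a multiple `r • x` with `r ∈ ℤ[1/q]`.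
Conversely `(m / qⁱ) • x = qʲ • (m • (q^(i+j))⁻¹ • x)` lies in `qʲM` for every `j`.
-/

open Finsupp

/-- `ℤ[1/q]` as an additive subgroup of `ℚ`. -/
def zInvPow (q : ℕ) : AddSubgroup ℚ where
  carrier := {r | ∃ (k : ℕ) (m : ℤ), (q : ℚ) ^ k * r = m}
  zero_mem' := ⟨0, 0, by simp⟩
  add_mem' := by
    rintro a b ⟨k, m, ha⟩ ⟨l, n, hb⟩
    refine ⟨k + l, m * q ^ l + n * q ^ k, ?_⟩
    push_cast
    linear_combination (q : ℚ) ^ l * ha + (q : ℚ) ^ k * hb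
  neg_mem' := by
    rintro a ⟨k, m, ha⟩
    exact ⟨k, -m, by push_cast; linear_combination -ha⟩

theorem one_mem_zInvPow (q : ℕ) : (1 : ℚ) ∈ zInvPow q :=
  ⟨0, 1, by simp⟩

theorem inv_pow_mem_zInvPow {q : ℕ} (hq : q ≠ 0) (i : ℕ) : ((q : ℚ) ^ i)⁻¹ ∈ zInvPow q :=
  ⟨i, 1, by simp [hq]⟩

theorem exists_eq_int_div_pow_of_mem_zInvPow {q : ℕ} (hq : q ≠ 0) {r : ℚ}
    (hr : r ∈ zInvPow q) :
    ∃ (m : ℤ) (i : ℕ), 1 ≤ i ∧ r = (m : ℚ) / (q : ℚ) ^ i := by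
  obtain ⟨k, m, hkm⟩ := hr
  have hq' : (q : ℚ) ≠ 0 := Nat.cast_ne_zero.mpr hq
  refine ⟨q * m, k + 1, le_add_self, ?_⟩
  push_cast
  rw [← hkm]
  field_simp
  ring

theorem Rat.eq_zero_of_forall_eq_pow_mul_int {q r : ℚ} (hq : 1 < q)
    (h : ∀ i : ℕ, 1 ≤ i → ∃ n : ℤ, r = q ^ i * n) : r = 0 := by
  by_contra hr
  obtain ⟨i, hi⟩ := pow_unbounded_of_one_lt |r| hq
  obtain ⟨n, rfl⟩ := h (i + 1) le_add_self
  have hn : (1 : ℚ) ≤ |(n : ℚ)| := by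
    exact_mod_cast Int.one_le_abs (by rintro rfl; simp at hr)
  have hle : q ^ i ≤ q ^ (i + 1) * |(n : ℚ)| :=
    (pow_le_pow_right₀ hq.le i.le_succ).trans (le_mul_of_one_le_right (by positivity) hn)
  rw [abs_mul, abs_of_pos (by positivity)] at hi
  linarith

section Lattice

variable {ι : Type*}

variable (ι) in
noncomputable def stdLattice : AddSubgroup (ι →₀ ℚ) :=
  AddSubgroup.closure (Set.range fun i : ι => single i (1 : ℚ))

/-- `M = L ⊕ₓ ℤ[1/q]`, for `L = stdLattice ι` and `x = single x₀ 1`. -/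
noncomputable def latticeAdjoinInvPow (x₀ : ι) (q : ℕ) : AddSubgroup (ι →₀ ℚ) :=
  AddSubgroup.closure
    (↑(stdLattice ι) ∪ {y | ∃ i : ℕ, 1 ≤ i ∧ y = ((q : ℚ) ^ i)⁻¹ • single x₀ (1 : ℚ)})

theorem latticeAdjoinInvPow_le_comap_apply {x₀ : ι} {q : ℕ} {A : AddSubgroup ℚ} (j : ι)
    (hA : (1 : ℚ) ∈ A) (hx₀ : j = x₀ → ∀ i : ℕ, ((q : ℚ) ^ i)⁻¹ ∈ A) :
    latticeAdjoinInvPow x₀ q ≤ A.comap (applyAddHom j) := by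
  have hL : stdLattice ι ≤ A.comap (applyAddHom j) := by
    refine (AddSubgroup.closure_le _).mpr ?_
    rintro _ ⟨i, rfl⟩
    by_cases hij : i = j <;> simp [hij, hA]
  refine (AddSubgroup.closure_le _).mpr (Set.union_subset hL ?_)
  rintro _ ⟨i, -, rfl⟩
  by_cases hj : j = x₀
  · subst hj
    simpa using hx₀ rfl i
  · simp [Ne.symm hj]

theorem apply_mem_zInvPow_of_mem_latticeAdjoinInvPow {x₀ : ι} {q : ℕ} (hq : q ≠ 0)
    {v : ι →₀ ℚ} (hv : v ∈ latticeAdjoinInvPow x₀ q) : v x₀ ∈ zInvPow q :=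
  latticeAdjoinInvPow_le_comap_apply x₀ (one_mem_zInvPow q)
    (fun _ => inv_pow_mem_zInvPow hq) hv

theorem exists_int_apply_of_mem_latticeAdjoinInvPow {x₀ : ι} {q : ℕ} {v : ι →₀ ℚ}
    (hv : v ∈ latticeAdjoinInvPow x₀ q) {j : ι} (hj : j ≠ x₀) : ∃ n : ℤ, v j = n := by
  obtain ⟨n, hn⟩ := latticeAdjoinInvPow_le_comap_apply (A := (Int.castAddHom ℚ).range) j
    ⟨1, by simp⟩ (fun h => absurd h hj) hv
  exact ⟨n, hn.symm⟩

theorem smul_single_mem_latticeAdjoinInvPow (x₀ : ι) (q : ℕ) (m : ℤ) (i : ℕ) (hi : 1 ≤ i) :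
    ((m : ℚ) / (q : ℚ) ^ i) • single x₀ (1 : ℚ) ∈ latticeAdjoinInvPow x₀ q := by
  have hgen : ((q : ℚ) ^ i)⁻¹ • single x₀ (1 : ℚ) ∈ latticeAdjoinInvPow x₀ q :=
    AddSubgroup.subset_closure (Or.inr ⟨i, hi, rfl⟩)
  simpa [div_eq_mul_inv, mul_smul] using AddSubgroup.zsmul_mem _ hgen m

end Lattice

/-- Let `L` be the free abelian group inside the `ℚ`-vector space `ι →₀ ℚ`
generated by the standard basis, `q` a prime, and `x = single x₀ 1` a basis
element.  Let `M = L ⊕ₓ ℤ[1/q]` be the subgroup generated by `L` together with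
`x/qⁱ` for `i ≥ 1`.  Then `⋂_{i≥1} qⁱM = x·ℤ[1/q]`. -/
theorem inter_qpow_eq_x_zInvPow
    {ι : Type*} (x₀ : ι) (q : ℕ) (hq : q.Prime)
    (L : AddSubgroup (ι →₀ ℚ))
    (hL : L = AddSubgroup.closure (Set.range fun i : ι => Finsupp.single i (1 : ℚ)))
    (M : AddSubgroup (ι →₀ ℚ))
    (hM : M = AddSubgroup.closure
      (↑L ∪ {y | ∃ i : ℕ, 1 ≤ i ∧ y = ((q : ℚ) ^ i)⁻¹ • Finsupp.single x₀ (1 : ℚ)})) :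
    {v : ι →₀ ℚ | ∀ i : ℕ, 1 ≤ i → ∃ w ∈ M, v = ((q : ℚ) ^ i) • w} =
      {v | ∃ (m : ℤ) (i : ℕ), 1 ≤ i ∧
        v = ((m : ℚ) / (q : ℚ) ^ i) • Finsupp.single x₀ (1 : ℚ)} := by
  rw [show M = latticeAdjoinInvPow x₀ q by rw [hM, hL]; rfl]
  ext v
  constructor
  · intro hv
    have hvanish : ∀ j ≠ x₀, v j = 0 := fun j hj =>
      Rat.eq_zero_of_forall_eq_pow_mul_int (Nat.one_lt_cast.mpr hq.one_lt) fun i hi => by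
        obtain ⟨w, hw, rfl⟩ := hv i hi
        obtain ⟨n, hn⟩ := exists_int_apply_of_mem_latticeAdjoinInvPow hw hj
        exact ⟨n, by simp [hn]⟩
    obtain ⟨w, hw, hvw⟩ := hv 1 le_rfl
    have hvM : v ∈ latticeAdjoinInvPow x₀ q := by
      rw [hvw, pow_one, Nat.cast_smul_eq_nsmul]
      exact nsmul_mem hw q
    obtain ⟨m, i, hi, hvx₀⟩ := exists_eq_int_div_pow_of_mem_zInvPow hq.ne_zero
      (apply_mem_zInvPow_of_mem_latticeAdjoinInvPow hq.ne_zero hvM)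
    refine ⟨m, i, hi, ?_⟩
    rw [smul_single_one, ← hvx₀, ← support_subset_singleton]
    intro j hj
    by_contra hne
    exact (mem_support_iff.mp hj) (hvanish j (by simpa using hne))
  · rintro ⟨m, i, hi, rfl⟩ j hj
    refine ⟨((m : ℚ) / (q : ℚ) ^ (i + j)) • single x₀ (1 : ℚ),
      smul_single_mem_latticeAdjoinInvPow x₀ q m (i + j) (by omega), ?_⟩
    rw [smul_smul, pow_add]
    field_simp [hq.ne_zero]
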